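/- Let R ⊆ V with vol(R) ≤ vol(V\R), δ ≥ 0, ε = vol(R)/vol(V\R) + δ. Let S* minimize φ̄_R(S) = ∂S/(vol(R∩S) − ε·vol((V\R)∩S)) over sets with positive denominator. Then for every set C satisfying vol(R∩C)/vol(C) ≥ vol(R)/vol(V) + γ·vol(V\R)/vol(V) for some γ > δ (with vol(C) ≤ vol(V\C)), it holds that φ(S*) ≤ (1/(γ−δ))·φ(C). -/

import Mathlib

/-!
Write `d(S) = vol(R ∩ S) - ε vol((V \ R) ∩ S)` for the denominator of `φ̄_R`. Since
`ε ≥ vol R / vol(V \ R)` and `vol R ≤ vol(V \ R)`, every `S` has `d(S) ≤ min(vol S, vol(V \ S))`,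
so `φ(S*) ≤ φ̄_R(S*)`. The density hypothesis on `C` gives `d(C) ≥ (γ - δ) vol C > 0`, so `C`
competes in the minimisation and `φ̄_R(S*) ≤ φ̄_R(C) ≤ φ(C) / (γ - δ)`.
-/

open Finset

variable {V : Type*} [Fintype V] [DecidableEq V]

/-- volume of a vertex set: sum of degrees -/
def vol (G : SimpleGraph V) [DecidableRel G.Adj] (S : Finset V) : ℝ :=
  ∑ v ∈ S, (G.degree v : ℝ)

/-- number of edges between two (disjoint) vertex sets -/
def cutB (G : SimpleGraph V) [DecidableRel G.Adj] (A B : Finset V) : ℝ :=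
  (((A ×ˢ B).filter fun p => G.Adj p.1 p.2).card : ℝ)

/-- boundary of S: number of edges from S to its complement -/
def bdry (G : SimpleGraph V) [DecidableRel G.Adj] (S : Finset V) : ℝ :=
  cutB G S Sᶜ

lemma vol_nonneg (G : SimpleGraph V) [DecidableRel G.Adj] (S : Finset V) : 0 ≤ vol G S :=
  sum_nonneg fun _ _ => Nat.cast_nonneg _

lemma vol_mono (G : SimpleGraph V) [DecidableRel G.Adj] {A B : Finset V} (h : A ⊆ B) :
    vol G A ≤ vol G B :=
  sum_le_sum_of_subset_of_nonneg h fun _ _ _ => Nat.cast_nonneg _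

lemma vol_inter_add_vol_inter_compl (G : SimpleGraph V) [DecidableRel G.Adj] (A S : Finset V) :
    vol G (A ∩ S) + vol G (A ∩ Sᶜ) = vol G A := by
  rw [vol, vol, ← sdiff_eq_inter_compl]
  exact sum_inter_add_sum_sdiff A S _

lemma vol_inter_add_vol_compl_inter (G : SimpleGraph V) [DecidableRel G.Adj] (R S : Finset V) :
    vol G (R ∩ S) + vol G (Rᶜ ∩ S) = vol G S := by
  rw [inter_comm R, inter_comm Rᶜ]
  exact vol_inter_add_vol_inter_compl G S R

lemma vol_add_vol_compl (G : SimpleGraph V) [DecidableRel G.Adj] (R : Finset V) :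
    vol G R + vol G Rᶜ = vol G univ :=
  sum_add_sum_compl R _

lemma bdry_nonneg (G : SimpleGraph V) [DecidableRel G.Adj] (S : Finset V) : 0 ≤ bdry G S :=
  Nat.cast_nonneg _

/-- The denominator `vol(R ∩ S) - ε vol((V \ R) ∩ S)` of `φ̄_R(S)`. -/
def relVol (G : SimpleGraph V) [DecidableRel G.Adj] (R : Finset V) (ε : ℝ) (S : Finset V) : ℝ :=
  vol G (R ∩ S) - ε * vol G (Rᶜ ∩ S)

section relVol

variable (G : SimpleGraph V) [DecidableRel G.Adj] {R : Finset V} {ε : ℝ}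

lemma relVol_le_vol_inter (hε : 0 ≤ ε) (S : Finset V) : relVol G R ε S ≤ vol G (R ∩ S) :=
  sub_le_self _ (mul_nonneg hε (vol_nonneg G _))

lemma relVol_le_vol (hε : 0 ≤ ε) (S : Finset V) : relVol G R ε S ≤ vol G S :=
  (relVol_le_vol_inter G hε S).trans (vol_mono G inter_subset_right)

/-- With `ρ = vol R / vol (V \ R) ≤ ε`, `ρ ≤ 1`:
`relVol S ≤ vol R - ρ vol((V \ R) ∩ S) = ρ vol((V \ R) \ S) ≤ vol (V \ S)`. -/
lemma relVol_le_vol_compl (hR : vol G R ≤ vol G Rᶜ) (hRc : 0 < vol G Rᶜ)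
    (hε : vol G R / vol G Rᶜ ≤ ε) (S : Finset V) : relVol G R ε S ≤ vol G Sᶜ := by
  set ρ := vol G R / vol G Rᶜ
  have hρ : ρ ≤ 1 := div_le_one_of_le₀ hR hRc.le
  have hρR : ρ * vol G Rᶜ = vol G R := div_mul_cancel₀ _ hRc.ne'
  have hRcS := vol_inter_add_vol_inter_compl G Rᶜ S
  have hRS : vol G (R ∩ S) ≤ vol G R := vol_mono G inter_subset_left
  have hSc : vol G (Rᶜ ∩ Sᶜ) ≤ vol G Sᶜ := vol_mono G inter_subset_right
  have hc := vol_nonneg G (Rᶜ ∩ S)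
  have he := vol_nonneg G (Rᶜ ∩ Sᶜ)
  unfold relVol
  nlinarith [mul_le_mul_of_nonneg_right hε hc, mul_le_mul_of_nonneg_right hρ he]

lemma relVol_le_min (hR : vol G R ≤ vol G Rᶜ) (hRc : 0 < vol G Rᶜ)
    (hε : vol G R / vol G Rᶜ ≤ ε) (S : Finset V) :
    relVol G R ε S ≤ min (vol G S) (vol G Sᶜ) :=
  le_min (relVol_le_vol G ((div_nonneg (vol_nonneg G R) hRc.le).trans hε) S)
    (relVol_le_vol_compl G hR hRc hε S)

end relVol

/-- Cleared of denominators, the density hypothesis reads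
`vol(R ∩ C) vol(V \ R) - vol R vol((V \ R) ∩ C) ≥ γ vol(V \ R) vol C`; the extra `δ` in `ε`
costs at most `δ vol C`. -/
lemma sub_mul_vol_le_relVol (G : SimpleGraph V) [DecidableRel G.Adj] {R C : Finset V}
    {δ ε γ : ℝ} (hδ : 0 ≤ δ) (hRc : 0 < vol G Rᶜ) (hε : ε = vol G R / vol G Rᶜ + δ)
    (hC : 0 < vol G C)
    (hq : vol G (R ∩ C) / vol G C
      ≥ vol G R / vol G univ + γ * (vol G Rᶜ / vol G univ)) :
    (γ - δ) * vol G C ≤ relVol G R ε C := by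
  have hV := vol_add_vol_compl G R
  have hCsplit := vol_inter_add_vol_compl_inter G R C
  have hVpos : 0 < vol G univ := by linarith [vol_nonneg G R]
  rw [ge_iff_le, ← mul_div_assoc, ← add_div, div_le_div_iff₀ hVpos hC] at hq
  have hexcess : γ * vol G Rᶜ * vol G C ≤ vol G (R ∩ C) * vol G Rᶜ - vol G R * vol G (Rᶜ ∩ C) := by
    rw [← hV, ← hCsplit] at hq
    rw [← hCsplit]
    linear_combination hq
  have hscaled : relVol G R ε C * vol G Rᶜ
      = vol G (R ∩ C) * vol G Rᶜ - vol G R * vol G (Rᶜ ∩ C) - δ * vol G Rᶜ * vol G (Rᶜ ∩ C) := by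
    rw [relVol, hε]
    field_simp
    ring
  refine le_of_mul_le_mul_right ?_ hRc
  rw [hscaled]
  linear_combination hexcess + mul_nonneg (mul_nonneg hδ hRc.le) (vol_nonneg G (R ∩ C))
    + δ * vol G Rᶜ * hCsplit

theorem cut_quality_guarantee_general (G : SimpleGraph V) [DecidableRel G.Adj]
    (R Sstar : Finset V) (δ ε : ℝ) (hδ : 0 ≤ δ) (hR : vol G R ≤ vol G Rᶜ)
    (hε : ε = vol G R / vol G Rᶜ + δ)
    (hdenom : 0 < vol G (R ∩ Sstar) - ε * vol G (Rᶜ ∩ Sstar))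
    (hmin : ∀ S : Finset V,
      0 < vol G (R ∩ S) - ε * vol G (Rᶜ ∩ S) →
      bdry G Sstar / (vol G (R ∩ Sstar) - ε * vol G (Rᶜ ∩ Sstar))
        ≤ bdry G S / (vol G (R ∩ S) - ε * vol G (Rᶜ ∩ S))) :
    ∀ (C : Finset V) (γ : ℝ), δ < γ → 0 < vol G C → vol G C ≤ vol G Cᶜ →
      vol G (R ∩ C) / vol G C
          ≥ vol G R / vol G Finset.univ + γ * (vol G Rᶜ / vol G Finset.univ) →
      bdry G Sstar / min (vol G Sstar) (vol G Sstarᶜ)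
        ≤ (1 / (γ - δ)) * (bdry G C / min (vol G C) (vol G Cᶜ)) := by
  intro C γ hγ hC hCc hq
  have hρε : vol G R / vol G Rᶜ ≤ ε := hε ▸ le_add_of_nonneg_right hδ
  have hε0 : 0 ≤ ε := (div_nonneg (vol_nonneg G R) (vol_nonneg G Rᶜ)).trans hρε
  have hRc : 0 < vol G Rᶜ :=
    (hdenom.trans_le (relVol_le_vol_inter G hε0 Sstar)).trans_le
      ((vol_mono G inter_subset_left).trans hR)
  have hCden := sub_mul_vol_le_relVol G hδ hRc hε hC hq
  have hCden_pos : 0 < relVol G R ε C := (mul_pos (sub_pos.2 hγ) hC).trans_le hCden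
  calc bdry G Sstar / min (vol G Sstar) (vol G Sstarᶜ)
      ≤ bdry G Sstar / relVol G R ε Sstar :=
        div_le_div_of_nonneg_left (bdry_nonneg G _) hdenom (relVol_le_min G hR hRc hρε Sstar)
    _ ≤ bdry G C / relVol G R ε C := hmin C hCden_pos
    _ ≤ bdry G C / ((γ - δ) * vol G C) :=
        div_le_div_of_nonneg_left (bdry_nonneg G _) (mul_pos (sub_pos.2 hγ) hC) hCden
    _ = (1 / (γ - δ)) * (bdry G C / min (vol G C) (vol G Cᶜ)) := by
        rw [min_eq_left hCc, one_div_mul_eq_div, div_div, mul_comm]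

theorem cut_quality_guarantee (G : SimpleGraph V) [DecidableRel G.Adj]
    (R Sstar : Finset V) (δ ε : ℝ) (hδ : 0 ≤ δ) (hR : vol G R ≤ vol G Rᶜ)
    (hRc : 0 < vol G Rᶜ)
    (hε : ε = vol G R / vol G Rᶜ + δ)
    (hdenom : 0 < vol G (R ∩ Sstar) - ε * vol G (Rᶜ ∩ Sstar))
    (hmin : ∀ S : Finset V,
      0 < vol G (R ∩ S) - ε * vol G (Rᶜ ∩ S) →
      bdry G Sstar / (vol G (R ∩ Sstar) - ε * vol G (Rᶜ ∩ Sstar))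
        ≤ bdry G S / (vol G (R ∩ S) - ε * vol G (Rᶜ ∩ S))) :
    ∀ (C : Finset V) (γ : ℝ), δ < γ → 0 < vol G C → vol G C ≤ vol G Cᶜ →
      vol G (R ∩ C) / vol G C
          ≥ vol G R / vol G Finset.univ + γ * (vol G Rᶜ / vol G Finset.univ) →
      bdry G Sstar / min (vol G Sstar) (vol G Sstarᶜ)
        ≤ (1 / (γ - δ)) * (bdry G C / min (vol G C) (vol G Cᶜ)) :=
  cut_quality_guarantee_general G R Sstar δ ε hδ hR hε hdenom hmin
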